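/- Let (X,P) be an irreducible Markov chain on a countable state space, and suppose there exist ε ∈ (0,1) and a finite subset A ⊂ X with sup_{x∈X} Σ_{y∈X∖A} p(x,y) < ε. Then Σ_{n≥1} f^{(n)}(x,y) = 1 for all x, y ∈ X (i.e., from any starting point the chain reaches any state with probability one). -/

import Mathlib

open scoped Classical ENNReal

noncomputable section

/-- The `n`-step transition probabilities: the entries of the `n`-th matrix power of `p`. -/
def matPow {X : Type*} (p : X → X → ℝ) : ℕ → X → X → ℝ
  | 0 => fun x y => if x = y then 1 else 0
  | n + 1 => fun x y => ∑' z, matPow p n x z * p z y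

/-- The first-return probabilities `f⁽ⁿ⁾(x,y)`. -/
def fret {X : Type*} (p : X → X → ℝ) : ℕ → X → X → ℝ
  | 0 => fun _ _ => 0
  | 1 => fun x y => p x y
  | n + 2 => fun x y => ∑' z, if z = y then 0 else p x z * fret p (n + 1) z y

def IsStochastic {X : Type*} (p : X → X → ℝ) : Prop :=
  (∀ x y, 0 ≤ p x y) ∧ (∀ x, Summable (p x)) ∧ (∀ x, ∑' y, p x y = 1)

/-!
Let `q_n(x)` be the probability of avoiding `y` at times `1, …, n`; then
`∑_{k ≤ n} f⁽ᵏ⁾(x,y) = 1 - q_n(x)`, so it suffices that `q_n → 0`. By irreducibility every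
`a ∈ A ∖ {y}` reaches `y` with positive probability, so there are `N` and `θ < 1` with
`q_N ≤ θ` on `A ∖ {y}`. Since one step lands in `A` with probability more than `1 - ε`, this gives
the uniform bound `q_{N+1} ≤ θ + (1 - θ) ε < 1`, and the Markov property turns it into geometric
decay of `q_n`.
-/

open Set Function Filter Topology Relation

section

variable {X : Type*} {p : X → X → ℝ}

lemma forall_update_mem {g : X → ℝ} {s : Set ℝ} (hg : ∀ z, g z ∈ s) {a : ℝ} (ha : a ∈ s)
    (y : X) : ∀ z, update g y a z ∈ s :=
  (forall_update_iff g fun _ v => v ∈ s).2 ⟨ha, fun z _ => hg z⟩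

def transOp (p : X → X → ℝ) (g : X → ℝ) (x : X) : ℝ := ∑' z, p x z * g z

/-- `avoidProb p y n x` is the probability that the chain started at `x` does not visit `y`
at the times `1, …, n`. -/
def avoidProb (p : X → X → ℝ) (y : X) : ℕ → X → ℝ
  | 0 => 1
  | n + 1 => transOp p (update (avoidProb p y n) y 0)

lemma transOp_single (x y : X) : transOp p (Pi.single y 1) x = p x y := by
  rw [transOp, tsum_eq_single y fun z hz => by simp [hz]]
  simp

lemma transOp_const_mul (b : ℝ) (g : X → ℝ) (x : X) :
    transOp p (fun z => b * g z) x = b * transOp p g x := by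
  simp only [transOp, mul_left_comm _ b, tsum_mul_left]

lemma fret_add_two (n : ℕ) (x y : X) :
    fret p (n + 2) x y = transOp p (update (fret p (n + 1) · y) y 0) x := by
  refine tsum_congr fun z => ?_
  rcases eq_or_ne z y with rfl | hz <;> simp [*]

lemma reflTransGen_of_matPow_ne_zero (hp : ∀ x y, 0 ≤ p x y) {n : ℕ} {a b : X}
    (h : matPow p n a b ≠ 0) : ReflTransGen (fun a b => 0 < p a b) a b := by
  induction n generalizing b with
  | zero =>
    obtain rfl : a = b := by by_contra hab; simp [matPow, hab] at h
    exact .refl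
  | succ n ih =>
    obtain ⟨z, hz⟩ : ∃ z, matPow p n a z * p z b ≠ 0 := by
      by_contra! h0
      exact h (by simp [matPow, h0])
    exact (ih (left_ne_zero_of_mul hz)).tail ((hp z b).lt_of_ne' (right_ne_zero_of_mul hz))

namespace IsStochastic

variable (hp : IsStochastic p)
include hp

lemma mem_Icc (x y : X) : p x y ∈ Icc 0 1 :=
  ⟨hp.1 x y, hp.2.2 x ▸ (hp.2.1 x).le_tsum y fun z _ => hp.1 x z⟩

lemma summable_mul {g : X → ℝ} {C : ℝ} (hg : ∀ z, g z ∈ Icc 0 C) (x : X) :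
    Summable fun z => p x z * g z :=
  ((hp.2.1 x).mul_right C).of_nonneg_of_le (fun z => mul_nonneg (hp.1 x z) (hg z).1)
    fun z => mul_le_mul_of_nonneg_left (hg z).2 (hp.1 x z)

lemma transOp_add {g h : X → ℝ} {C D : ℝ} (hg : ∀ z, g z ∈ Icc 0 C) (hh : ∀ z, h z ∈ Icc 0 D)
    (x : X) : transOp p (g + h) x = transOp p g x + transOp p h x := by
  simp only [transOp, Pi.add_apply, mul_add]
  exact (hp.summable_mul hg x).tsum_add (hp.summable_mul hh x)

lemma transOp_one (x : X) : transOp p 1 x = 1 := by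
  simpa [transOp] using hp.2.2 x

lemma transOp_mono {g h : X → ℝ} (hg : ∀ z, 0 ≤ g z) (hgh : g ≤ h) (hh : ∀ z, h z ≤ 1)
    (x : X) : transOp p g x ≤ transOp p h x :=
  (hp.summable_mul (fun z => ⟨hg z, (hgh z).trans (hh z)⟩) x).tsum_le_tsum
    (fun z => mul_le_mul_of_nonneg_left (hgh z) (hp.1 x z))
    (hp.summable_mul (fun z => ⟨(hg z).trans (hgh z), hh z⟩) x)

lemma transOp_mem_Icc {g : X → ℝ} (hg : ∀ z, g z ∈ Icc 0 1) (x : X) :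
    transOp p g x ∈ Icc 0 1 :=
  ⟨tsum_nonneg fun z => mul_nonneg (hp.1 x z) (hg z).1,
    (hp.transOp_mono (fun z => (hg z).1) (fun z => (hg z).2) (fun _ => le_rfl) x).trans_eq
      (hp.transOp_one x)⟩

lemma transOp_lt_one {g : X → ℝ} (hg : ∀ z, g z ∈ Icc 0 1) {x c : X} (hc : 0 < p x c)
    (hgc : g c < 1) : transOp p g x < 1 := by
  rw [← hp.2.2 x]
  exact (hp.summable_mul hg x).tsum_lt_tsum (fun z => mul_le_of_le_one_right (hp.1 x z) (hg z).2)
    (mul_lt_of_lt_one_right hc hgc) (hp.2.1 x)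

lemma transOp_le_of_le_on {g : X → ℝ} (hg : ∀ z, g z ∈ Icc 0 1) {A : Finset X} {θ : ℝ}
    (hgA : ∀ a ∈ A, g a ≤ θ) (x : X) :
    transOp p g x ≤ θ + (1 - θ) * ∑' z, if z ∈ A then 0 else p x z := by
  have hout : Summable fun z => if z ∈ A then 0 else p x z :=
    (hp.2.1 x).of_nonneg_of_le (fun z => by split_ifs <;> simp [hp.1 x z])
      (fun z => by split_ifs <;> simp [hp.1 x z])
  have hle : ∀ z, p x z * g z ≤ θ * p x z + (1 - θ) * if z ∈ A then 0 else p x z := by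
    intro z
    split_ifs with hz
    · nlinarith [hgA z hz, hp.1 x z]
    · nlinarith [(hg z).2, hp.1 x z]
  calc transOp p g x ≤ ∑' z, (θ * p x z + (1 - θ) * if z ∈ A then 0 else p x z) :=
        (hp.summable_mul hg x).tsum_le_tsum hle (((hp.2.1 x).mul_left θ).add (hout.mul_left _))
    _ = θ + (1 - θ) * ∑' z, if z ∈ A then 0 else p x z := by
        rw [((hp.2.1 x).mul_left θ).tsum_add (hout.mul_left _), tsum_mul_left, tsum_mul_left,
          hp.2.2 x, mul_one]

lemma fret_mem_Icc (y : X) : ∀ n x, fret p n x y ∈ Icc 0 1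
  | 0, _ => by simp [fret]
  | 1, x => hp.mem_Icc x y
  | n + 2, x => by
    rw [fret_add_two]
    exact hp.transOp_mem_Icc (forall_update_mem (fun z => fret_mem_Icc y (n + 1) z) (by simp) y) x

lemma sum_range_fret_mem_Icc (y : X) (n : ℕ) (x : X) :
    ∑ k ∈ Finset.range (n + 1), fret p k x y ∈ Icc 0 ((n : ℝ) + 1) := by
  refine ⟨Finset.sum_nonneg fun k _ => (hp.fret_mem_Icc y k x).1, ?_⟩
  simpa using Finset.sum_le_card_nsmul (Finset.range (n + 1)) _ 1
    fun k _ => (hp.fret_mem_Icc y k x).2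

/-- First-step analysis: `y` is hit within `n + 1` steps iff the first step goes to `y`, or to some
`z ≠ y` from which `y` is hit within `n` steps. -/
lemma sum_range_fret_succ (y : X) : ∀ n x, ∑ k ∈ Finset.range (n + 2), fret p k x y =
    transOp p (update (fun z => ∑ k ∈ Finset.range (n + 1), fret p k z y) y 1) x
  | 0, x => by
    have h0 : (fun z => ∑ k ∈ Finset.range (0 + 1), fret p k z y) = 0 := by ext; simp [fret]
    have h1 : ∑ k ∈ Finset.range (0 + 2), fret p k x y = p x y := by
      simp [fret, Finset.sum_range_succ]
    rw [h0, h1]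
    exact (transOp_single x y).symm
  | n + 1, x => by
    have hS := forall_update_mem (hp.sum_range_fret_mem_Icc y n) (a := 1) ⟨zero_le_one, by simp⟩ y
    have hF := forall_update_mem (fun z => hp.fret_mem_Icc y (n + 1) z) (a := 0) (by simp) y
    rw [Finset.sum_range_succ, sum_range_fret_succ y n x, fret_add_two, ← hp.transOp_add hS hF,
      ← update_add, add_zero]
    simp only [Finset.sum_range_succ _ (n + 1)]
    rfl

lemma avoidProb_mem_Icc (y : X) : ∀ n x, avoidProb p y n x ∈ Icc 0 1
  | 0, _ => by simp [avoidProb]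
  | n + 1, x => hp.transOp_mem_Icc (forall_update_mem (avoidProb_mem_Icc y n) (by simp) y) x

lemma update_avoidProb_mem_Icc (y : X) (n : ℕ) : ∀ z, update (avoidProb p y n) y 0 z ∈ Icc 0 1 :=
  forall_update_mem (hp.avoidProb_mem_Icc y n) (by simp) y

lemma avoidProb_add_sum_range_fret (y : X) :
    ∀ n x, avoidProb p y n x + ∑ k ∈ Finset.range (n + 1), fret p k x y = 1
  | 0, _ => by simp [avoidProb, fret]
  | n + 1, x => by
    have hS := forall_update_mem (hp.sum_range_fret_mem_Icc y n) (a := 1) ⟨zero_le_one, by simp⟩ y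
    have hsum : avoidProb p y n + (fun z => ∑ k ∈ Finset.range (n + 1), fret p k z y) = 1 :=
      funext (avoidProb_add_sum_range_fret y n)
    rw [hp.sum_range_fret_succ y n x, avoidProb,
      ← hp.transOp_add (hp.update_avoidProb_mem_Icc y n) hS, ← update_add, zero_add,
      hsum, update_one, hp.transOp_one]

lemma hasSum_fret_of_tendsto_avoidProb {x y : X}
    (h : Tendsto (avoidProb p y · x) atTop (𝓝 0)) : HasSum (fret p · x y) 1 := by
  rw [hasSum_iff_tendsto_nat_of_nonneg (fun n => (hp.fret_mem_Icc y n x).1),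
    ← tendsto_add_atTop_iff_nat 1]
  have hpartial : (fun n => ∑ k ∈ Finset.range (n + 1), fret p k x y) =
      fun n => 1 - avoidProb p y n x :=
    funext fun n => eq_sub_of_add_eq' (hp.avoidProb_add_sum_range_fret y n x)
  simpa [hpartial] using tendsto_const_nhds.sub h

lemma avoidProb_antitone (y x : X) : Antitone (avoidProb p y · x) := by
  suffices h : ∀ n x, avoidProb p y (n + 1) x ≤ avoidProb p y n x from
    antitone_nat_of_succ_le fun n => h n x
  intro n
  induction n with
  | zero => exact fun x => (hp.avoidProb_mem_Icc y 1 x).2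
  | succ n ih =>
    exact hp.transOp_mono (fun z => (hp.update_avoidProb_mem_Icc y (n + 1) z).1)
      (update_le_update_iff.2 ⟨le_rfl, fun z _ => ih z⟩)
      (fun z => (hp.update_avoidProb_mem_Icc y n z).2)

/-- Markov property at time `m`: avoiding `y` for `n` more steps costs a factor `b`. -/
lemma avoidProb_add_le_mul {y : X} {n : ℕ} {b : ℝ} (hb : b ∈ Icc 0 1)
    (hn : ∀ z, avoidProb p y n z ≤ b) : ∀ m x, avoidProb p y (m + n) x ≤ b * avoidProb p y m x
  | 0, x => by simpa [avoidProb] using hn x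
  | m + 1, x => by
    have hq := hp.update_avoidProb_mem_Icc y m
    rw [add_right_comm, avoidProb, avoidProb, ← transOp_const_mul]
    refine hp.transOp_mono (fun z => (hp.update_avoidProb_mem_Icc y (m + n) z).1)
      (fun z => ?_) (fun z => mul_le_one₀ hb.2 (hq z).1 (hq z).2) x
    rcases eq_or_ne z y with rfl | hz
    · simp
    · simpa [hz] using avoidProb_add_le_mul hb hn m z

lemma exists_update_avoidProb_lt_one {a y : X} (h : ReflTransGen (fun a b => 0 < p a b) a y) :
    ∃ n, update (avoidProb p y n) y 0 a < 1 := by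
  induction h using ReflTransGen.head_induction_on with
  | refl => exact ⟨0, by simp⟩
  | @head a c hac _ ih =>
    obtain ⟨n, hn⟩ := ih
    refine ⟨n + 1, lt_of_le_of_lt ?_ (hp.transOp_lt_one (hp.update_avoidProb_mem_Icc y n) hac hn)⟩
    rcases eq_or_ne a y with rfl | ha
    · rw [update_self]
      exact (hp.avoidProb_mem_Icc a (n + 1) a).1
    · rw [update_of_ne ha]
      rfl

lemma exists_update_avoidProb_le_on_finset {y : X}
    (hreach : ∀ a, ReflTransGen (fun a b => 0 < p a b) a y) (A : Finset X) :
    ∃ N θ, θ < 1 ∧ ∀ a ∈ A, update (avoidProb p y N) y 0 a ≤ θ := by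
  choose n hn using fun a => hp.exists_update_avoidProb_lt_one (hreach a)
  set f := update (avoidProb p y (A.sup n)) y 0
  have hlt : ∀ a ∈ A, f a < 1 := by
    intro a ha
    refine lt_of_le_of_lt ?_ (hn a)
    rcases eq_or_ne a y with rfl | hay
    · simp [f]
    · simpa [f, hay] using hp.avoidProb_antitone y a (A.le_sup ha)
  rcases A.eq_empty_or_nonempty with rfl | hA
  · exact ⟨0, 0, zero_lt_one, by simp⟩
  · obtain ⟨a₀, ha₀, hmax⟩ := A.exists_max_image f hA
    exact ⟨A.sup n, f a₀, hlt a₀ ha₀, hmax⟩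

lemma tendsto_avoidProb_zero {y : X} {N : ℕ} {b : ℝ} (hb : b < 1)
    (hN : ∀ z, avoidProb p y (N + 1) z ≤ b) (x : X) :
    Tendsto (avoidProb p y · x) atTop (𝓝 0) := by
  have hb0 : 0 ≤ b := (hp.avoidProb_mem_Icc y _ x).1.trans (hN x)
  have hpow : ∀ k z, avoidProb p y (k * (N + 1)) z ≤ b ^ k := by
    intro k
    induction k with
    | zero => exact fun z => by simp [avoidProb]
    | succ k ih =>
      intro z
      rw [Nat.succ_mul, pow_succ']
      exact (hp.avoidProb_add_le_mul ⟨hb0, hb.le⟩ hN _ z).trans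
        (mul_le_mul_of_nonneg_left (ih z) hb0)
  refine tendsto_of_tendsto_of_tendsto_of_le_of_le tendsto_const_nhds
    ((tendsto_pow_atTop_nhds_zero_of_lt_one hb0 hb).comp
      (Nat.tendsto_div_const_atTop N.succ_ne_zero))
    (fun n => (hp.avoidProb_mem_Icc y n x).1) fun n => ?_
  exact (hp.avoidProb_antitone y x (Nat.div_mul_le_self n (N + 1))).trans (hpow _ x)

end IsStochastic

end

theorem reaches_every_state_with_probability_one_general {X : Type*}
    (p : X → X → ℝ) (hp : IsStochastic p)
    (hirr : ∀ x y : X, ∃ n : ℕ, 0 < matPow p n x y)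
    (ε : ℝ) (hε : ε ∈ Set.Ioo (0 : ℝ) 1) (A : Finset X)
    (hA : ∀ x, ∑' y, (if y ∈ A then 0 else p x y) < ε) :
    ∀ x y : X, ∑' n : ℕ, fret p n x y = 1 := by
  intro x y
  have hreach (a : X) : ReflTransGen (fun a b => 0 < p a b) a y :=
    have ⟨_, hn⟩ := hirr a y
    reflTransGen_of_matPow_ne_zero hp.1 hn.ne'
  obtain ⟨N, θ, hθ, hθA⟩ := hp.exists_update_avoidProb_le_on_finset hreach A
  have hcontract (z : X) : avoidProb p y (N + 1) z ≤ θ + (1 - θ) * ε :=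
    (hp.transOp_le_of_le_on (hp.update_avoidProb_mem_Icc y N) hθA z).trans
      (add_le_add_right (mul_le_mul_of_nonneg_left (hA z).le (sub_nonneg.2 hθ.le)) θ)
  have hρ : θ + (1 - θ) * ε < 1 := by nlinarith [hε.2]
  exact (hp.hasSum_fret_of_tendsto_avoidProb (hp.tendsto_avoidProb_zero hρ hcontract x)).tsum_eq

/-- under the hypothesis of Theorem 2.2, every state is reached from every
starting point with probability one: `F(x,y) = ∑_{n≥1} f⁽ⁿ⁾(x,y) = 1`. -/
theorem reaches_every_state_with_probability_one {X : Type*} [Countable X]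
    (p : X → X → ℝ) (hp : IsStochastic p)
    (hirr : ∀ x y : X, ∃ n : ℕ, 0 < matPow p n x y)
    (ε : ℝ) (hε : ε ∈ Set.Ioo (0 : ℝ) 1) (A : Finset X)
    (hA : ∀ x, ∑' y, (if y ∈ A then 0 else p x y) < ε) :
    ∀ x y : X, ∑' n : ℕ, fret p n x y = 1 :=
  reaches_every_state_with_probability_one_general p hp hirr ε hε A hA
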